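/- Let α, β : ℝ → ℝ be continuously differentiable with α(t) ≠ 0 for all t, and let Γ : ℝ^m → (ℝ^m × ℝ^m → ℝ^m) be a continuously differentiable field of bilinear maps. Then for every p, v ∈ ℝ^m there exist T > 0 and a unique C² curve x : (−T, T) → ℝ^m with x(0) = p, x'(0) = v, satisfying the geodesic-in-expectation equation α(t)·(x''(t) + Γ(x(t))(x'(t), x'(t))) + β(t)·x'(t) = 0 for all t ∈ (−T, T). -/

import Mathlib

/-!
Adjoining time as a state variable and dividing by `α`, the equation becomes the autonomous
first-order system `ż = F z` on `ℝ × E × E` with `F (t, x, w) = (1, w, -Γ x w w - (β t / α t) • w)`,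
and `F` is `C¹` because `α` never vanishes. Picard–Lindelöf gives a local solution whose position
component is the required curve. Conversely every `C²` solution `y` lifts to the solution
`t ↦ (t, y t, y' t)` of the same system, so uniqueness reduces to uniqueness of integral curves of a
`C¹` vector field.
-/

open Set Filter Topology

section Prod

variable {E F : Type*} [NormedAddCommGroup E] [NormedSpace ℝ E]
  [NormedAddCommGroup F] [NormedSpace ℝ F] {f : ℝ → E × F} {f' : E × F} {t : ℝ}

theorem HasDerivAt.fst (h : HasDerivAt f f' t) : HasDerivAt (fun u => (f u).1) f'.1 t := by
  simpa using h.hasFDerivAt.fst.hasDerivAt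

theorem HasDerivAt.snd (h : HasDerivAt f f' t) : HasDerivAt (fun u => (f u).2) f'.2 t := by
  simpa using h.hasFDerivAt.snd.hasDerivAt

end Prod

section Autonomous

variable {E : Type*} [NormedAddCommGroup E] [NormedSpace ℝ E] {F : E → E}

theorem contDiffOn_two_of_hasDerivAt_comp (hF : ContDiff ℝ 1 F) {f : ℝ → E} {s : Set ℝ}
    (hs : IsOpen s) (hf : ∀ t ∈ s, HasDerivAt f (F (f t)) t) : ContDiffOn ℝ 2 f s := by
  have hdiff : DifferentiableOn ℝ f s := fun t ht =>
    (hf t ht).differentiableAt.differentiableWithinAt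
  have hderiv : EqOn (F ∘ f) (deriv f) s := fun t ht => (hf t ht).deriv.symm
  have hC1 : ContDiffOn ℝ 1 f s :=
    (contDiffOn_succ_iff_deriv_of_isOpen (n := 0) hs).2
      ⟨hdiff, by simp, contDiffOn_zero.2
        ((hF.continuous.comp_continuousOn hdiff.continuousOn).congr hderiv.symm)⟩
  exact (contDiffOn_succ_iff_deriv_of_isOpen (n := 1) hs).2
    ⟨hdiff, by simp, (hF.comp_contDiffOn hC1).congr hderiv.symm⟩

/-- Uniqueness holds on the whole interval because a `C¹` field is Lipschitz on the compact set
swept out by both solutions over any compact subinterval. -/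
theorem ODE_solution_unique_of_mem_Ioo_of_contDiff (hF : ContDiff ℝ 1 F) {f g : ℝ → E}
    {a b t₀ : ℝ} (ht₀ : t₀ ∈ Ioo a b) (hf : ∀ t ∈ Ioo a b, HasDerivAt f (F (f t)) t)
    (hg : ∀ t ∈ Ioo a b, HasDerivAt g (F (g t)) t) (heq : f t₀ = g t₀) :
    EqOn f g (Ioo a b) := by
  intro t ht
  obtain ⟨a', ha, ha'⟩ := exists_between (lt_min ht₀.1 ht.1)
  obtain ⟨b', hb', hb⟩ := exists_between (max_lt ht₀.2 ht.2)
  have hsub : Icc a' b' ⊆ Ioo a b := Icc_subset_Ioo ha hb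
  have hsub' : Ioo a' b' ⊆ Ioo a b := Ioo_subset_Icc_self.trans hsub
  have hfc : ContinuousOn f (Icc a' b') := HasDerivAt.continuousOn fun u hu => hf u (hsub hu)
  have hgc : ContinuousOn g (Icc a' b') := HasDerivAt.continuousOn fun u hu => hg u (hsub hu)
  obtain ⟨K, hK⟩ := hF.locallyLipschitz.locallyLipschitzOn.exists_lipschitzOnWith_of_compact
    ((isCompact_Icc.image_of_continuousOn hfc).union (isCompact_Icc.image_of_continuousOn hgc))
  refine ODE_solution_unique_of_mem_Icc (v := fun _ => F) (fun _ _ => hK)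
    ⟨ha'.trans_le (min_le_left _ _), (le_max_left _ _).trans_lt hb'⟩ hfc
    (fun u hu => hf u (hsub' hu))
    (fun u hu => Or.inl (mem_image_of_mem f (Ioo_subset_Icc_self hu))) hgc
    (fun u hu => hg u (hsub' hu))
    (fun u hu => Or.inr (mem_image_of_mem g (Ioo_subset_Icc_self hu))) heq
    ⟨(ha'.trans_le (min_le_right _ _)).le, ((le_max_right _ _).trans_lt hb').le⟩

end Autonomous

theorem smul_add_add_smul_eq_zero_iff {E : Type*} [AddCommGroup E] [Module ℝ E] {c d : ℝ}
    (hc : c ≠ 0) {a g w : E} : c • (a + g) + d • w = 0 ↔ a = -g - (d / c) • w := by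
  have hfactor : c • (a + g) + d • w = c • (a + g + (d / c) • w) := by
    rw [smul_add c (a + g), smul_smul, mul_div_cancel₀ d hc]
  rw [hfactor, smul_eq_zero_iff_right hc, add_assoc, add_eq_zero_iff_eq_neg, neg_add']

section Geodesic

variable {E : Type*} [NormedAddCommGroup E] [NormedSpace ℝ E]
  (α β : ℝ → ℝ) (Γ : E → E →L[ℝ] E →L[ℝ] E)

noncomputable def geodesicField (z : ℝ × E × E) : ℝ × E × E :=
  (1, z.2.2, -Γ z.2.1 z.2.2 z.2.2 - (β z.1 / α z.1) • z.2.2)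

variable {α β Γ}

theorem contDiff_geodesicField (hα : ContDiff ℝ 1 α) (hβ : ContDiff ℝ 1 β) (hα0 : ∀ t, α t ≠ 0)
    (hΓ : ContDiff ℝ 1 Γ) : ContDiff ℝ 1 (geodesicField α β Γ) := by
  have hx : ContDiff ℝ 1 fun z : ℝ × E × E => z.2.1 := contDiff_fst.comp contDiff_snd
  have hw : ContDiff ℝ 1 fun z : ℝ × E × E => z.2.2 := contDiff_snd.comp contDiff_snd
  refine contDiff_const.prodMk (hw.prodMk (ContDiff.sub ?_ ?_))
  · exact ((hΓ.comp hx).clm_apply hw).clm_apply hw |>.neg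
  · exact ((hβ.comp contDiff_fst).div (hα.comp contDiff_fst) fun z => hα0 z.1).smul hw

theorem fst_eq_of_hasDerivAt_geodesicField {f : ℝ → ℝ × E × E} {s : Set ℝ} (hs : IsOpen s)
    (hs' : IsPreconnected s) (hf : ∀ t ∈ s, HasDerivAt f (geodesicField α β Γ (f t)) t)
    {t₀ : ℝ} (ht₀ : t₀ ∈ s) (h : (f t₀).1 = t₀) : ∀ t ∈ s, (f t).1 = t :=
  hs.eqOn_of_deriv_eq hs' (fun t ht => (hf t ht).fst.differentiableAt.differentiableWithinAt)
    differentiableOn_id (fun t ht => by simp [(hf t ht).fst.deriv, geodesicField]) ht₀ h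

theorem geodesic_eq_of_hasDerivAt_geodesicField (hα0 : ∀ t, α t ≠ 0) {f : ℝ → ℝ × E × E}
    {s : Set ℝ} (hs : IsOpen s) (hf : ∀ t ∈ s, HasDerivAt f (geodesicField α β Γ (f t)) t)
    (htime : ∀ t ∈ s, (f t).1 = t) {t : ℝ} (ht : t ∈ s) :
    let x := fun u => (f u).2.1
    α t • (deriv (deriv x) t + Γ (x t) (deriv x t) (deriv x t)) + β t • deriv x t = 0 := by
  intro x
  have hderiv : deriv x =ᶠ[𝓝 t] fun u => (f u).2.2 :=
    eventually_of_mem (hs.mem_nhds ht) fun u hu => (hf u hu).snd.fst.deriv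
  rw [hderiv.deriv_eq, hderiv.eq_of_nhds, (hf t ht).snd.snd.deriv,
    smul_add_add_smul_eq_zero_iff (hα0 t)]
  simp [x, geodesicField, htime t ht]

theorem hasDerivAt_geodesicField_of_geodesic (hα0 : ∀ t, α t ≠ 0) {y : ℝ → E} {s : Set ℝ}
    (hs : IsOpen s) (hy : ContDiffOn ℝ 2 y s) {t : ℝ} (ht : t ∈ s)
    (heq : α t • (deriv (deriv y) t + Γ (y t) (deriv y t) (deriv y t)) + β t • deriv y t = 0) :
    HasDerivAt (fun u => (u, y u, deriv y u)) (geodesicField α β Γ (t, y t, deriv y t)) t := by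
  have hy' : ContDiffOn ℝ 1 (deriv y) s := hy.deriv_of_isOpen hs (by norm_num)
  have h1 := (hy.differentiableOn (by norm_num) t ht).differentiableAt (hs.mem_nhds ht)
  have h2 := (hy'.differentiableOn (by norm_num) t ht).differentiableAt (hs.mem_nhds ht)
  rw [smul_add_add_smul_eq_zero_iff (hα0 t)] at heq
  simpa [geodesicField, heq] using (hasDerivAt_id t).prodMk (h1.hasDerivAt.prodMk h2.hasDerivAt)

end Geodesic

/-- Let `α, β : ℝ → ℝ` be `C¹` with `α(t) ≠ 0` for all `t`, and let
`Γ : ℝ^m → (ℝ^m × ℝ^m → ℝ^m)` be a `C¹` field of bilinear maps (the Christoffel symbols).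
Then for every `p, v ∈ ℝ^m` there exist `T > 0` and a unique `C²` curve
`x : (−T, T) → ℝ^m` with `x(0) = p`, `x'(0) = v`, satisfying the geodesic-in-expectation
equation `α(t)·(x''(t) + Γ(x(t))(x'(t), x'(t))) + β(t)·x'(t) = 0` on `(−T, T)`; uniqueness
means that any two `C²` solutions with the same initial position and velocity agree on the
intersection of their domains. -/
theorem geodesic_in_expectation_exists_unique {m : ℕ}
    (α β : ℝ → ℝ) (hα : ContDiff ℝ 1 α) (hβ : ContDiff ℝ 1 β)
    (hα0 : ∀ t, α t ≠ 0)
    (Γ : EuclideanSpace ℝ (Fin m) →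
      (EuclideanSpace ℝ (Fin m) →L[ℝ] EuclideanSpace ℝ (Fin m) →L[ℝ]
        EuclideanSpace ℝ (Fin m)))
    (hΓ : ContDiff ℝ 1 Γ) :
    ∀ p v : EuclideanSpace ℝ (Fin m),
      ∃ T > (0 : ℝ), ∃ x : ℝ → EuclideanSpace ℝ (Fin m),
        (ContDiffOn ℝ 2 x (Set.Ioo (-T) T) ∧ x 0 = p ∧ deriv x 0 = v ∧
          ∀ t ∈ Set.Ioo (-T) T,
            α t • (deriv (deriv x) t + Γ (x t) (deriv x t) (deriv x t))
              + β t • deriv x t = 0) ∧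
        ∀ (T' : ℝ), 0 < T' → ∀ y : ℝ → EuclideanSpace ℝ (Fin m),
          ContDiffOn ℝ 2 y (Set.Ioo (-T') T') → y 0 = p → deriv y 0 = v →
          (∀ t ∈ Set.Ioo (-T') T',
            α t • (deriv (deriv y) t + Γ (y t) (deriv y t) (deriv y t))
              + β t • deriv y t = 0) →
          Set.EqOn x y (Set.Ioo (-T) T ∩ Set.Ioo (-T') T') := by
  intro p v
  have hF := contDiff_geodesicField hα hβ hα0 hΓ
  have hF₀ : ContDiffAt ℝ 1 (geodesicField α β Γ) (0, p, v) := hF.contDiffAt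
  obtain ⟨f, hf0, T, hT, hf⟩ :=
    hF₀.exists_forall_mem_closedBall_exists_eq_forall_mem_Ioo_hasDerivAt₀ 0
  rw [zero_sub, zero_add] at hf
  have h0 : (0 : ℝ) ∈ Ioo (-T) T := ⟨neg_lt_zero.2 hT, hT⟩
  have htime :=
    fst_eq_of_hasDerivAt_geodesicField isOpen_Ioo isPreconnected_Ioo hf h0 (by simp [hf0])
  refine ⟨T, hT, fun t => (f t).2.1,
    ⟨?_, by simp [hf0], by simp [(hf 0 h0).snd.fst.deriv, hf0, geodesicField],
    fun t ht => geodesic_eq_of_hasDerivAt_geodesicField hα0 isOpen_Ioo hf htime ht⟩, ?_⟩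
  · exact (contDiff_fst.comp contDiff_snd).comp_contDiffOn
      (contDiffOn_two_of_hasDerivAt_comp hF isOpen_Ioo hf)
  intro T' hT' y hy hy0 hy'0 hyeq t ht
  rw [Ioo_inter_Ioo] at ht
  have hsub := Ioo_subset_Ioo (le_max_left (-T) (-T')) (min_le_left T T')
  have hsub' := Ioo_subset_Ioo (le_max_right (-T) (-T')) (min_le_right T T')
  have hlift := ODE_solution_unique_of_mem_Ioo_of_contDiff hF
    ⟨max_lt (neg_lt_zero.2 hT) (neg_lt_zero.2 hT'), lt_min hT hT'⟩
    (fun u hu => hf u (hsub hu))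
    (fun u hu => hasDerivAt_geodesicField_of_geodesic hα0 isOpen_Ioo hy (hsub' hu)
      (hyeq u (hsub' hu)))
    (by simp [hf0, hy0, hy'0]) ht
  exact congrArg (fun z => z.2.1) hlift
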